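/- arXiv:2602.20238 — 7 statements merged into one kernel-verified Lean document; each statement's English description precedes it below -/
import Mathlib

section
/- Let G = (V, E) be a simple graph, let N ⊆ N' ⊆ E be subsets of edges, let e ∈ N, and let r, R be reals with 0 ≤ r ≤ R. If e is (r, R)-isolated in N', then e is (2r, R − r)-clustered in N. -/
open SimpleGraph Filter MeasureTheory ENNReal

noncomputable section

namespace UFPaper

variable {V : Type*}

/-- Distance between two edges of `G`, i.e. the graph distance in the line graph `L(G)`,
valued in `ℝ≥0∞` (with `∞` for unreachable pairs). -/
noncomputable def eDist (G : SimpleGraph V) (e f : G.edgeSet) : ℝ≥0∞ :=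
  ((G.lineGraph.edist e f : ℕ∞) : ℝ≥0∞)

/-- `B_e(r)`: the set of edges within distance `r` of the edge `e`. -/
def ball (G : SimpleGraph V) (e : G.edgeSet) (r : ℝ) : Set G.edgeSet :=
  {f | eDist G e f ≤ ENNReal.ofReal r}

/-- `dist(C, C')`: the minimum distance between two subsets of edges. -/
noncomputable def setDist (G : SimpleGraph V) (C C' : Set G.edgeSet) : ℝ≥0∞ :=
  ⨅ e ∈ C, ⨅ f ∈ C', eDist G e f

/-- `diam(C)`: the diameter of a subset of edges. -/
noncomputable def diam (G : SimpleGraph V) (C : Set G.edgeSet) : ℝ≥0∞ :=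
  ⨆ e ∈ C, ⨆ f ∈ C, eDist G e f

/-- Two edges `e, f` are `(r, R)`-isolated if `f ∉ B_e(R) \ B_e(r)`. -/
def IsolatedPair (G : SimpleGraph V) (r R : ℝ) (e f : G.edgeSet) : Prop :=
  f ∉ ball G e R \ ball G e r

/-- An edge `e` is `(r, R)`-isolated in `N` if `e` and `f` are `(r, R)`-isolated
for every `f ∈ N`. -/
def IsolatedIn (G : SimpleGraph V) (r R : ℝ) (N : Set G.edgeSet) (e : G.edgeSet) : Prop :=
  ∀ f ∈ N, IsolatedPair G r R e f

/-- `C ⊆ N` is a `(D, B)`-cluster in `N` if `diam C ≤ D` and `dist(N \ C, C) > B`. -/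
def IsCluster (G : SimpleGraph V) (D B : ℝ) (N C : Set G.edgeSet) : Prop :=
  C ⊆ N ∧ diam G C ≤ ENNReal.ofReal D ∧ ENNReal.ofReal B < setDist G (N \ C) C

/-- An edge is `(D, B)`-clustered in `N` if it belongs to some `(D, B)`-cluster in `N`. -/
def ClusteredIn (G : SimpleGraph V) (D B : ℝ) (N : Set G.edgeSet) (e : G.edgeSet) : Prop :=
  ∃ C : Set G.edgeSet, IsCluster G D B N C ∧ e ∈ C

/-- The level-`k` clustered sets `𝖭_k`. -/
def clusteredSet (G : SimpleGraph V) (d b : ℕ → ℝ) (N : Set G.edgeSet) : ℕ → Set G.edgeSet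
  | 0 => N
  | k + 1 => clusteredSet G d b N k \
      {e | ClusteredIn G (d k) (b k) (clusteredSet G d b N k) e}

/-- The level-`k` isolated sets `𝒩_k`. -/
def isolatedSet (G : SimpleGraph V) (d b : ℕ → ℝ) (N : Set G.edgeSet) : ℕ → Set G.edgeSet
  | 0 => N
  | k + 1 => isolatedSet G d b N k \
      {e | IsolatedIn G (d k / 2) (b k + d k / 2) (isolatedSet G d b N k) e}

/-- `M_k(e)`: the collection of minimal-size subsets of `E` forcing `e` into the level-`k`
isolated set. -/
def minForcing (G : SimpleGraph V) (d b : ℕ → ℝ) (k : ℕ) (e : G.edgeSet) :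
    Set (Set G.edgeSet) :=
  {N | e ∈ isolatedSet G d b N k ∧ ∀ N' : Set G.edgeSet, N' ⊂ N → e ∉ isolatedSet G d b N' k}

end UFPaper

open UFPaper in
/-- If `e ∈ N ⊆ N' ⊆ E` and `e` is `(r, R)`-isolated in `N'` (with `0 ≤ r ≤ R`),
then `e` is `(2r, R − r)`-clustered in `N`. -/
theorem isolated_implies_clustered {V : Type*} (G : SimpleGraph V)
    (N N' : Set G.edgeSet) (hNN' : N ⊆ N') (e : G.edgeSet) (heN : e ∈ N)
    (r R : ℝ) (hr : 0 ≤ r) (hrR : r ≤ R)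
    (hiso : IsolatedIn G r R N' e) :
    ClusteredIn G (2 * r) (R - r) N e := by
  classical
  -- triangle inequality and basic facts for eDist
  have tri : ∀ a b c : G.edgeSet, eDist G a c ≤ eDist G a b + eDist G b c := by
    intro a b c
    rw [eDist, eDist, eDist, ← ENat.toENNReal_add]
    exact ENat.toENNReal_le.2 (G.lineGraph.edist_triangle)
  have ecomm : ∀ a b : G.edgeSet, eDist G a b = eDist G b a := by
    intro a b; rw [eDist, eDist, SimpleGraph.edist_comm]
  have eself : eDist G e e = 0 := by
    rw [eDist, SimpleGraph.edist_self]; simp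
  set C : Set G.edgeSet := N ∩ ball G e r with hC
  have heC : e ∈ C := ⟨heN, by simp [UFPaper.ball, eself]⟩
  refine ⟨C, ⟨Set.inter_subset_left, ?_, ?_⟩, heC⟩
  · -- diameter bound
    refine iSup₂_le fun g hg => iSup₂_le fun g' hg' => ?_
    have h1 : eDist G e g ≤ ENNReal.ofReal r := hg.2
    have h2 : eDist G e g' ≤ ENNReal.ofReal r := hg'.2
    calc eDist G g g' ≤ eDist G g e + eDist G e g' := tri g e g'
      _ = eDist G e g + eDist G e g' := by rw [ecomm g e]
      _ ≤ ENNReal.ofReal r + ENNReal.ofReal r := add_le_add h1 h2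
      _ = ENNReal.ofReal (2 * r) := by
          rw [← ENNReal.ofReal_add hr hr, two_mul]
  · -- separation bound
    set c : ℝ≥0∞ := ((Nat.floor R + 1 : ℕ) : ℝ≥0∞) with hc
    have hRc : ENNReal.ofReal R < c := by
      rw [hc, ← ENNReal.ofReal_natCast]
      refine (ENNReal.ofReal_lt_ofReal_iff (by positivity)).2 ?_
      push_cast
      exact Nat.lt_floor_add_one R
    have key : ∀ f ∈ N \ C, ∀ g ∈ C, c - ENNReal.ofReal r ≤ eDist G f g := by
      intro f hf g hg
      have hfN' : f ∈ N' := hNN' hf.1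
      have hfnr : f ∉ ball G e r := fun h => hf.2 ⟨hf.1, h⟩
      have hfnR : f ∉ ball G e R := fun h => (hiso f hfN') ⟨h, hfnr⟩
      have hRf : ENNReal.ofReal R < eDist G e f := lt_of_not_ge hfnR
      -- eDist e f is a natural (or ∞) exceeding R, hence ≥ c
      have hcf : c ≤ eDist G e f := by
        rw [eDist] at hRf ⊢
        rcases h : (G.lineGraph.edist e f) with _ | m
        · exact le_top
        · rw [h] at hRf
          replace hRf : ENNReal.ofReal R < ((m : ℕ) : ℝ≥0∞) := hRf
          show c ≤ ((m : ℕ) : ℝ≥0∞)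
          rw [← ENNReal.ofReal_natCast] at hRf
          rw [hc, ← ENNReal.ofReal_natCast, ← ENNReal.ofReal_natCast]
          have hRm : R < (m : ℝ) :=
            (ENNReal.ofReal_lt_ofReal_iff_of_nonneg (hr.trans hrR)).1 hRf
          refine ENNReal.ofReal_le_ofReal ?_
          have hfl : Nat.floor R < m := (Nat.floor_lt (hr.trans hrR)).2 hRm
          exact_mod_cast Nat.succ_le_of_lt hfl
      have htri : eDist G e f ≤ ENNReal.ofReal r + eDist G f g := by
        calc eDist G e f ≤ eDist G e g + eDist G g f := tri e g f
          _ ≤ ENNReal.ofReal r + eDist G f g := by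
              rw [ecomm g f]; exact add_le_add (show eDist G e g ≤ ENNReal.ofReal r from hg.2) le_rfl
      have := hcf.trans htri
      exact tsub_le_iff_left.2 this
    have hsep : c - ENNReal.ofReal r ≤ setDist G (N \ C) C := by
      refine le_iInf₂ fun f hf => le_iInf₂ fun g hg => key f hf g hg
    refine lt_of_lt_of_le ?_ hsep
    have hrne : ENNReal.ofReal r ≠ ∞ := ENNReal.ofReal_ne_top
    rw [(ENNReal.cancel_of_ne hrne).lt_tsub_iff_right,
      ← ENNReal.ofReal_add (by linarith) hr]
    rw [sub_add_cancel]
    exact hRc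
end
end

section
/- Let G = (V, E) be a simple graph and N ⊆ E. With the level-k clustered sets 𝖭_k and level-k isolated sets 𝒩_k constructed from N using sequences {d_k}, {b_k}, it holds that 𝖭_k ⊆ 𝒩_k for every k ≥ 0. -/
open SimpleGraph Filter MeasureTheory ENNReal

noncomputable section

namespace UFPaper

variable {V : Type*}

lemma eDist_self (G : SimpleGraph V) (e : G.edgeSet) : eDist G e e = 0 := by
  simp [eDist, SimpleGraph.edist_self]

lemma eDist_comm (G : SimpleGraph V) (e f : G.edgeSet) : eDist G e f = eDist G f e := by
  simp [eDist, SimpleGraph.edist_comm]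

lemma eDist_triangle (G : SimpleGraph V) (e f g : G.edgeSet) :
    eDist G e g ≤ eDist G e f + eDist G f g := by
  rw [eDist, eDist, eDist, ← ENat.toENNReal_add]
  exact ENat.toENNReal_le.mpr (SimpleGraph.edist_triangle (G := G.lineGraph) (u := e) (v := f) (w := g))

/-- From `eDist f g < ⌊r⌋₊ + 1` conclude `eDist f g ≤ ofReal r` (for `0 ≤ r`). -/
lemma eDist_le_ofReal_of_lt (G : SimpleGraph V) {f g : G.edgeSet} {r : ℝ} (hr : 0 ≤ r)
    (h : eDist G f g < ((Nat.floor r + 1 : ℕ) : ℝ≥0∞)) :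
    eDist G f g ≤ ENNReal.ofReal r := by
  rw [eDist] at h ⊢
  rw [show (((Nat.floor r + 1 : ℕ)) : ℝ≥0∞) = (((Nat.floor r + 1 : ℕ) : ℕ∞) : ℝ≥0∞) by
    simp] at h
  have h2 : G.lineGraph.edist f g < ((Nat.floor r : ℕ) : ℕ∞) + 1 := by
    have := ENat.toENNReal_lt.mp h
    simpa [Nat.cast_add] using this
  have h3 : G.lineGraph.edist f g ≤ ((Nat.floor r : ℕ) : ℕ∞) :=
    (ENat.lt_add_one_iff (by exact_mod_cast WithTop.coe_ne_top)).mp h2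
  calc ((G.lineGraph.edist f g : ℕ∞) : ℝ≥0∞) ≤ (((Nat.floor r : ℕ) : ℕ∞) : ℝ≥0∞) :=
        ENat.toENNReal_le.mpr h3
    _ = ENNReal.ofReal (Nat.floor r : ℝ) := by
        rw [ENat.toENNReal_coe, ENNReal.ofReal_natCast]
    _ ≤ ENNReal.ofReal r := ENNReal.ofReal_le_ofReal (Nat.floor_le hr)

end UFPaper

open UFPaper in
/-- With the level-`k` clustered sets `𝖭_k` and level-`k` isolated sets `𝒩_k`
constructed from `N` using monotone sequences `{d_k}, {b_k}` with `b_k ≥ d_k > 0`, one has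
`𝖭_k ⊆ 𝒩_k` for every `k ≥ 0`. -/
theorem clusteredSet_subset_isolatedSet {V : Type*} (G : SimpleGraph V)
    (d b : ℕ → ℝ) (hd_mono : Monotone d) (hb_mono : Monotone b)
    (hdpos : ∀ k, 0 < d k) (hdb : ∀ k, d k ≤ b k)
    (N : Set G.edgeSet) :
    ∀ k : ℕ, clusteredSet G d b N k ⊆ isolatedSet G d b N k := by
  intro k
  induction k with
  | zero => exact le_refl N
  | succ k ih =>
    intro e he
    obtain ⟨hek, hnc⟩ := he
    have hb0 : 0 ≤ b k := le_of_lt ((hdpos k).trans_le (hdb k))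
    refine ⟨ih hek, fun hiso => ?_⟩
    set C : Set G.edgeSet := ball G e (d k / 2) ∩ clusteredSet G d b N k with hC
    have heC : e ∈ C := ⟨by simp [UFPaper.ball, eDist_self], hek⟩
    -- diam C ≤ d k
    have hdiam : diam G C ≤ ENNReal.ofReal (d k) := by
      rw [UFPaper.diam]
      refine iSup₂_le fun f hf => iSup₂_le fun g hg => ?_
      calc eDist G f g ≤ eDist G f e + eDist G e g := eDist_triangle G f e g
        _ ≤ ENNReal.ofReal (d k / 2) + ENNReal.ofReal (d k / 2) := by
            exact add_le_add (by rw [eDist_comm]; exact hf.1) hg.1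
        _ = ENNReal.ofReal (d k) := by
            rw [← ENNReal.ofReal_add (by linarith [hdpos k]) (by linarith [hdpos k])]
            ring_nf
    -- not a cluster, so setDist fails
    have hnotdist : ¬ ENNReal.ofReal (b k) <
        setDist G (clusteredSet G d b N k \ C) C := fun hlt =>
      hnc ⟨C, ⟨Set.inter_subset_right, hdiam, hlt⟩, heC⟩
    push_neg at hnotdist
    -- get a pair within distance b k
    have hlt : setDist G (clusteredSet G d b N k \ C) C <
        ((Nat.floor (b k) + 1 : ℕ) : ℝ≥0∞) := by
      refine hnotdist.trans_lt ?_
      rw [← ENNReal.ofReal_natCast]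
      refine ENNReal.ofReal_lt_ofReal_iff (by positivity) |>.mpr ?_
      push_cast
      exact Nat.lt_floor_add_one (b k)
    rw [setDist] at hlt
    obtain ⟨f, hf⟩ := iInf_lt_iff.mp hlt
    obtain ⟨hfmem, hf⟩ := iInf_lt_iff.mp hf
    obtain ⟨g, hg⟩ := iInf_lt_iff.mp hf
    obtain ⟨hgmem, hfg⟩ := iInf_lt_iff.mp hg
    have hfgle : eDist G f g ≤ ENNReal.ofReal (b k) := eDist_le_ofReal_of_lt G hb0 hfg
    -- f is linked to e
    have hfball : f ∈ ball G e (b k + d k / 2) := by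
      rw [UFPaper.ball, Set.mem_setOf_eq]
      calc eDist G e f ≤ eDist G e g + eDist G g f := eDist_triangle G e g f
        _ ≤ ENNReal.ofReal (d k / 2) + ENNReal.ofReal (b k) := by
            exact add_le_add hgmem.1 (by rw [eDist_comm]; exact hfgle)
        _ = ENNReal.ofReal (b k + d k / 2) := by
            rw [← ENNReal.ofReal_add (by linarith [hdpos k]) hb0]; ring_nf
    have hfnball : f ∉ ball G e (d k / 2) := fun h => hfmem.2 ⟨h, hfmem.1⟩
    exact hiso f (ih hfmem.1) ⟨hfball, hfnball⟩
end
end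

section
/- Let λ > 1, β, γ > 0, Λ, Δ > 0, and let f : ℤ_{>0} → ℝ_{>0} be monotonically increasing. Define b_k := β λ^{f(k+1)} + 1 and d_k := γ λ^{f(k)} − 1, and assume d_k > 0 for all k ≥ 1. Then for every k ≥ 1, ∏_{j=0}^{k−1} [Λ (b_{k−j} + d_{k−j}/2)^Δ]^{2^j} ≤ [Λ (β + (γ + λ^{−f(1)})/2)^Δ]^{2^k − 1} · λ^{Δ ∑_{j=0}^{k−1} f(k−j+1) 2^j}. -/
/-! Each factor is dominated by a fixed constant times a power of `λ`:
`b_m + d_m / 2 = β λ^{f(m+1)} + 1/2 + γ λ^{f(m)} / 2`, and monotonicity of `f` lets one raise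
`λ^{f(m)}` to `λ^{f(m+1)}` and write `1 = λ^{-f(1)} λ^{f(1)} ≤ λ^{-f(1)} λ^{f(m+1)}`.
Multiplying these bounds with the weights `2^j`, the constants collect to the power
`∑_{j<k} 2^j = 2^k - 1`. -/

open Finset Real

lemma scale_add_half_le {lam β γ r s t : ℝ} (hlam : 1 ≤ lam) (hγ : 0 ≤ γ)
    (hr : r ≤ t) (hs : s ≤ t) :
    β * lam ^ t + 1 + (γ * lam ^ s - 1) / 2 ≤ (β + (γ + lam ^ (-r)) / 2) * lam ^ t := by
  have hlam0 : 0 < lam := one_pos.trans_le hlam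
  have hγs : γ * lam ^ s ≤ γ * lam ^ t :=
    mul_le_mul_of_nonneg_left (rpow_le_rpow_of_exponent_le hlam hs) hγ
  have hone : 1 ≤ lam ^ (-r) * lam ^ t := by
    rw [← rpow_add hlam0]
    exact one_le_rpow hlam (by linarith)
  nlinarith

lemma mul_rpow_le_of_le_mul_rpow {Λ Δ x c lam t : ℝ} (hΛ : 0 ≤ Λ) (hΔ : 0 ≤ Δ) (hx : 0 ≤ x)
    (hc : 0 ≤ c) (hlam : 0 < lam) (h : x ≤ c * lam ^ t) :
    Λ * x ^ Δ ≤ Λ * c ^ Δ * lam ^ (Δ * t) := by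
  calc Λ * x ^ Δ ≤ Λ * (c * lam ^ t) ^ Δ := by gcongr
    _ = Λ * c ^ Δ * lam ^ (Δ * t) := by
      rw [mul_rpow hc (rpow_nonneg hlam.le t), ← rpow_mul hlam.le, mul_comm t Δ, mul_assoc]

lemma prod_mul_rpow_pow {ι : Type*} (s : Finset ι) {lam : ℝ} (hlam : 0 < lam) (C : ℝ)
    (g : ι → ℝ) (w : ι → ℕ) :
    ∏ j ∈ s, (C * lam ^ g j) ^ w j = C ^ (∑ j ∈ s, w j) * lam ^ (∑ j ∈ s, g j * w j) := by
  simp_rw [mul_pow, prod_mul_distrib, prod_pow_eq_pow_sum, rpow_sum_of_pos hlam,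
    ← rpow_natCast, ← rpow_mul hlam.le]

lemma sum_range_two_pow (k : ℕ) : ∑ j ∈ range k, 2 ^ j = 2 ^ k - 1 := by
  simpa using Nat.geomSum_eq le_rfl k

theorem product_estimate_general (lam β γ Λ Δ : ℝ) (hlam : 1 < lam) (hβ : 0 < β) (hγ : 0 < γ)
    (hΛ : 0 < Λ) (hΔ : 0 < Δ)
    (f : ℕ → ℝ)
    (hfmono : ∀ j k : ℕ, 1 ≤ j → j ≤ k → f j ≤ f k)
    (b d : ℕ → ℝ)
    (hb : ∀ k : ℕ, b k = β * lam ^ f (k + 1) + 1)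
    (hd : ∀ k : ℕ, d k = γ * lam ^ f k - 1)
    (k : ℕ) :
    ∏ j ∈ Finset.range k, (Λ * (b (k - j) + d (k - j) / 2) ^ Δ) ^ (2 ^ j : ℕ) ≤
      (Λ * (β + (γ + lam ^ (-f 1)) / 2) ^ Δ) ^ (2 ^ k - 1 : ℕ) *
        lam ^ (Δ * ∑ j ∈ Finset.range k, f (k - j + 1) * 2 ^ j) := by
  have hlam0 : 0 < lam := one_pos.trans hlam
  have hbase_nonneg (m : ℕ) : 0 ≤ b m + d m / 2 := by
    rw [hb, hd]
    have := rpow_pos_of_pos hlam0 (f m)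
    have := rpow_pos_of_pos hlam0 (f (m + 1))
    nlinarith
  have hfactor (m : ℕ) (hm : 1 ≤ m) : Λ * (b m + d m / 2) ^ Δ ≤
      Λ * (β + (γ + lam ^ (-f 1)) / 2) ^ Δ * lam ^ (Δ * f (m + 1)) := by
    refine mul_rpow_le_of_le_mul_rpow hΛ.le hΔ.le (hbase_nonneg m)
      (by positivity) hlam0 ?_
    rw [hb, hd]
    exact scale_add_half_le hlam.le hγ.le (hfmono 1 (m + 1) le_rfl (by omega))
      (hfmono m (m + 1) hm (by omega))
  calc ∏ j ∈ range k, (Λ * (b (k - j) + d (k - j) / 2) ^ Δ) ^ (2 ^ j : ℕ)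
      ≤ ∏ j ∈ range k, (Λ * (β + (γ + lam ^ (-f 1)) / 2) ^ Δ * lam ^ (Δ * f (k - j + 1)))
          ^ (2 ^ j : ℕ) := by
        refine prod_le_prod (fun j _ => by have := hbase_nonneg (k - j); positivity)
          fun j hj => pow_le_pow_left₀ (by have := hbase_nonneg (k - j); positivity)
            (hfactor (k - j) (by simp at hj; omega)) _
    _ = _ := by
        rw [prod_mul_rpow_pow _ hlam0, sum_range_two_pow, mul_sum]
        simp only [Nat.cast_pow, Nat.cast_ofNat, mul_assoc]

/-- the algebraic product estimate: with `b_k = β λ^{f(k+1)} + 1` and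
`d_k = γ λ^{f(k)} − 1` (all `d_k > 0`), for every `k ≥ 1`,
`∏_{j=0}^{k−1} [Λ (b_{k−j} + d_{k−j}/2)^Δ]^{2^j}
  ≤ [Λ (β + (γ + λ^{−f(1)})/2)^Δ]^{2^k − 1} · λ^{Δ ∑_{j=0}^{k−1} f(k−j+1) 2^j}`. -/
theorem product_estimate (lam β γ Λ Δ : ℝ) (hlam : 1 < lam) (hβ : 0 < β) (hγ : 0 < γ)
    (hΛ : 0 < Λ) (hΔ : 0 < Δ)
    (f : ℕ → ℝ) (hfpos : ∀ k : ℕ, 1 ≤ k → 0 < f k)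
    (hfmono : ∀ j k : ℕ, 1 ≤ j → j ≤ k → f j ≤ f k)
    (b d : ℕ → ℝ)
    (hb : ∀ k : ℕ, b k = β * lam ^ f (k + 1) + 1)
    (hd : ∀ k : ℕ, d k = γ * lam ^ f k - 1)
    (hdpos : ∀ k : ℕ, 1 ≤ k → 0 < d k)
    (k : ℕ) (hk : 1 ≤ k) :
    ∏ j ∈ Finset.range k, (Λ * (b (k - j) + d (k - j) / 2) ^ Δ) ^ (2 ^ j : ℕ) ≤
      (Λ * (β + (γ + lam ^ (-f 1)) / 2) ^ Δ) ^ (2 ^ k - 1 : ℕ) *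
        lam ^ (Δ * ∑ j ∈ Finset.range k, f (k - j + 1) * 2 ^ j) :=
  product_estimate_general lam β γ Λ Δ hlam hβ hγ hΛ hΔ f hfmono b d hb hd k
end

section
/- Let λ > e and β, γ > 0 satisfy βλ > 2γ and γ ≥ 2γ/λ + 2β + λ^{−2 log 2}, where log is the natural logarithm. Define b_k := β λ^{(k+1) log(k+1)} + 1 and d_k := γ λ^{k log k} − 1 for k ≥ 1. Then for all k ≥ 1 one has b_k ≥ d_k and d_{k+1} ≥ 2(d_k + b_k). -/
private lemma step_ineq (x : ℝ) (hx : 1 ≤ x) :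
    x * Real.log x + 1 ≤ (x + 1) * Real.log (x + 1) := by
  have hx0 : (0:ℝ) < x := by linarith
  have hx1 : (0:ℝ) < x + 1 := by linarith
  have hlog2 : Real.log 2 ≤ Real.log (x + 1) :=
    Real.log_le_log (by norm_num) (by linarith)
  have hfrac : Real.log (x / (x + 1)) ≤ x / (x + 1) - 1 :=
    Real.log_le_sub_one_of_pos (by positivity)
  have hdiv : Real.log (x / (x + 1)) = Real.log x - Real.log (x + 1) :=
    Real.log_div (ne_of_gt hx0) (ne_of_gt hx1)
  have h1 : 1 - x / (x + 1) ≤ Real.log (x + 1) - Real.log x := by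
    rw [hdiv] at hfrac; linarith
  have h4 : x * (1 - x / (x + 1)) ≤ x * (Real.log (x + 1) - Real.log x) :=
    mul_le_mul_of_nonneg_left h1 hx0.le
  have hsimp : x * (1 - x / (x + 1)) = x / (x + 1) := by
    field_simp
    ring
  have h3 : (1:ℝ)/2 ≤ x / (x + 1) := by
    rw [div_le_div_iff₀ (by norm_num) hx1]; linarith
  have hl2 : (0.6931471803 : ℝ) < Real.log 2 := Real.log_two_gt_d9
  have hexp : x * (Real.log (x + 1) - Real.log x)
      = x * Real.log (x + 1) - x * Real.log x := by ring
  rw [hsimp, hexp] at h4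
  nlinarith [h4, h3, hlog2, hl2]

/-- with `λ > e`, `βλ > 2γ` and `γ ≥ 2γ/λ + 2β + λ^{−2 log 2}`, the sequences
`b_k = β λ^{(k+1)log(k+1)} + 1` and `d_k = γ λ^{k log k} − 1` satisfy `b_k ≥ d_k` and
`d_{k+1} ≥ 2(d_k + b_k)` for all `k ≥ 1`. -/
theorem bk_dk_constraints (lam β γ : ℝ) (hlam : Real.exp 1 < lam) (hβ : 0 < β) (hγ : 0 < γ)
    (h1 : 2 * γ < β * lam)
    (h2 : 2 * γ / lam + 2 * β + lam ^ (-(2 * Real.log 2)) ≤ γ)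
    (b d : ℕ → ℝ)
    (hb : ∀ k : ℕ, 1 ≤ k → b k = β * lam ^ (((k : ℝ) + 1) * Real.log ((k : ℝ) + 1)) + 1)
    (hd : ∀ k : ℕ, 1 ≤ k → d k = γ * lam ^ ((k : ℝ) * Real.log (k : ℝ)) - 1) :
    ∀ k : ℕ, 1 ≤ k → d k ≤ b k ∧ 2 * (d k + b k) ≤ d (k + 1) := by
  have he : (2.7182818283 : ℝ) < Real.exp 1 := Real.exp_one_gt_d9
  have hlam1 : (1:ℝ) < lam := by linarith
  have hlam0 : (0:ℝ) < lam := by linarith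
  intro k hk
  have hk1 : (1:ℝ) ≤ (k:ℝ) := by exact_mod_cast hk
  have hk0 : (0:ℝ) ≤ (k:ℝ) := by linarith
  set f := (k:ℝ) * Real.log (k:ℝ) with hf
  set g := ((k:ℝ) + 1) * Real.log ((k:ℝ) + 1) with hg
  have hstep : f + 1 ≤ g := by
    have := step_ineq (k:ℝ) hk1; linarith
  have hf0 : 0 ≤ f := mul_nonneg hk0 (Real.log_nonneg hk1)
  have hg2 : 2 * Real.log 2 ≤ g := by
    have h2k : (2:ℝ) ≤ (k:ℝ) + 1 := by linarith
    have hl2 : Real.log 2 ≤ Real.log ((k:ℝ) + 1) :=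
      Real.log_le_log (by norm_num) h2k
    have hl2' : (0:ℝ) ≤ Real.log 2 := Real.log_nonneg (by norm_num)
    calc 2 * Real.log 2 ≤ ((k:ℝ) + 1) * Real.log 2 := by nlinarith
      _ ≤ g := by rw [hg]; nlinarith [Real.log_nonneg (show (1:ℝ) ≤ (k:ℝ)+1 by linarith)]
  set A := lam ^ f with hA
  set B := lam ^ g with hB
  have hApos : 0 < A := Real.rpow_pos_of_pos hlam0 f
  have hBpos : 0 < B := Real.rpow_pos_of_pos hlam0 g
  have hAB : A * lam ≤ B := by
    have : lam ^ (f + 1) ≤ lam ^ g :=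
      Real.rpow_le_rpow_of_exponent_le hlam1.le hstep
    rwa [Real.rpow_add_one (ne_of_gt hlam0)] at this
  set C := lam ^ (2 * Real.log 2) with hC
  have hCpos : 0 < C := Real.rpow_pos_of_pos hlam0 _
  have hCB : C ≤ B := Real.rpow_le_rpow_of_exponent_le hlam1.le hg2
  have hCinv : lam ^ (-(2 * Real.log 2)) = C⁻¹ := by
    rw [Real.rpow_neg hlam0.le]
  rw [hCinv] at h2
  -- rewrite b, d
  have hdk : d k = γ * A - 1 := hd k hk
  have hbk : b k = β * B + 1 := hb k hk
  have hdk1 : d (k + 1) = γ * B - 1 := by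
    have := hd (k + 1) (by omega)
    rw [this]
    push_cast
    rw [hB]
  constructor
  · -- d k ≤ b k
    rw [hdk, hbk]
    nlinarith [mul_le_mul_of_nonneg_left hAB hβ.le, mul_pos hγ hApos]
  · -- 2 * (d k + b k) ≤ d (k+1)
    rw [hdk, hbk, hdk1]
    have hA' : A ≤ B / lam := by
      rw [le_div_iff₀ hlam0]; exact hAB
    have h2B : (2 * γ / lam + 2 * β + C⁻¹) * B ≤ γ * B :=
      mul_le_mul_of_nonneg_right h2 hBpos.le
    have hCB' : (1:ℝ) ≤ C⁻¹ * B := by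
      rw [inv_mul_eq_div, le_div_iff₀ hCpos]; linarith
    have heq : (2 * γ / lam + 2 * β + C⁻¹) * B
        = 2 * γ * (B / lam) + 2 * β * B + C⁻¹ * B := by ring
    rw [heq] at h2B
    nlinarith [mul_le_mul_of_nonneg_left hA' (by positivity : (0:ℝ) ≤ 2 * γ)]
end

section
/- Let d ≥ 2 be an integer and define the integer sequence l_0 := d, l_{k+1} := ⌈(l_k − ⌊(l_k − 2)/3⌋)/2⌉. Then for every k ≥ 0, l_k ≤ (d − 3/4)(1/3)^k + 7/4. -/
/-!
By integrality, the two roundings give `2 l_{k+1} ≤ l_k - ⌊(l_k - 2)/3⌋ + 1` and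
`3 ⌊(l_k - 2)/3⌋ ≥ l_k - 4`, hence `l_{k+1} ≤ l_k / 3 + 7/6`. This affine contraction has
fixed point `7/4`, so `l_k - 7/4 ≤ (d - 7/4) 3^{-k}`, slightly better than the claimed bound.
-/

theorem le_geom_add_of_le_affine {u : ℕ → ℝ} {a c : ℝ} (ha : 0 ≤ a)
    (h : ∀ k, u (k + 1) ≤ a * u k + (1 - a) * c) (k : ℕ) :
    u k ≤ (u 0 - c) * a ^ k + c := by
  induction k with
  | zero => simp
  | succ k ih =>
    calc u (k + 1) ≤ a * u k + (1 - a) * c := h k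
      _ ≤ a * ((u 0 - c) * a ^ k + c) + (1 - a) * c := by gcongr
      _ = (u 0 - c) * a ^ (k + 1) + c := by ring

theorem ceil_half_sub_floor_third_le (l : ℤ) :
    ((⌈((l : ℝ) - (⌊((l : ℝ) - 2) / 3⌋ : ℝ)) / 2⌉ : ℤ) : ℝ) ≤ (l : ℝ) / 3 + 7 / 6 := by
  set f := ⌊((l : ℝ) - 2) / 3⌋
  set c := ⌈((l : ℝ) - f) / 2⌉
  have hf : l - 5 < 3 * f := by
    have := Int.sub_one_lt_floor (((l : ℝ) - 2) / 3)
    exact_mod_cast (by linarith : (l : ℝ) - 5 < 3 * f)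
  have hc : 2 * c < l - f + 2 := by
    have := Int.ceil_lt_add_one (((l : ℝ) - f) / 2)
    exact_mod_cast (by linarith : 2 * (c : ℝ) < l - f + 2)
  have key : (6 * c : ℝ) ≤ 2 * l + 7 := by exact_mod_cast (by omega : 6 * c ≤ 2 * l + 7)
  linarith

theorem segment_length_bound_general (d : ℤ) (l : ℕ → ℤ) (h0 : l 0 = d)
    (hrec : ∀ k : ℕ, l (k + 1) = ⌈((l k : ℝ) - (⌊((l k : ℝ) - 2) / 3⌋ : ℝ)) / 2⌉) :
    ∀ k : ℕ, (l k : ℝ) ≤ ((d : ℝ) - 3 / 4) * (1 / 3) ^ k + 7 / 4 := by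
  intro k
  have hstep (k : ℕ) : (l (k + 1) : ℝ) ≤ 1 / 3 * l k + (1 - 1 / 3) * (7 / 4) := by
    rw [hrec k]
    linarith [ceil_half_sub_floor_third_le (l k)]
  have hgeom := le_geom_add_of_le_affine (u := fun k ↦ (l k : ℝ)) (by norm_num) hstep k
  rw [h0] at hgeom
  have hpow : (0 : ℝ) ≤ (1 / 3) ^ k := by positivity
  linarith

/-- for an integer `d ≥ 2` and the integer sequence `l_0 = d`,
`l_{k+1} = ⌈(l_k − ⌊(l_k − 2)/3⌋)/2⌉`, one has `l_k ≤ (d − 3/4)(1/3)^k + 7/4` for every `k`. -/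
theorem segment_length_bound (d : ℤ) (hd : 2 ≤ d) (l : ℕ → ℤ) (h0 : l 0 = d)
    (hrec : ∀ k : ℕ, l (k + 1) = ⌈((l k : ℝ) - (⌊((l k : ℝ) - 2) / 3⌋ : ℝ)) / 2⌉) :
    ∀ k : ℕ, (l k : ℝ) ≤ ((d : ℝ) - 3 / 4) * (1 / 3) ^ k + 7 / 4 :=
  segment_length_bound_general d l h0 hrec
end

section
/- Let d ≥ 5 be an integer and define l_0 := d, l_{k+1} := ⌈(l_k − ⌊(l_k − 2)/3⌋)/2⌉. Then the set {k ≥ 0 : l_k < 5} is nonempty, and its minimum k_0 satisfies k_0 ≤ log_3[(4/13)(d − 3/4)] + 1. -/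
/-!
Evaluating the floor and the ceiling by integer division gives `3 l_{k+1} ≤ l_k + 3`,
so the excess `l_k - 3/2` shrinks by a factor of at least 3 per step.
Hence `l_n < 5` as soon as `(d - 3/2)/3^n < 7/2`, which holds for
`n = ⌊log_3 (2/7 (d - 3/2))⌋ + 1 ≤ log_3 (2/7 (d - 3/2)) + 1 ≤ log_3 (4/13 (d - 3/4)) + 1`.
-/

section FloorDiv

variable {k : Type*} [Field k] [LinearOrder k] [IsOrderedRing k] [FloorRing k]

theorem floor_intCast_div_natCast (m : ℤ) (n : ℕ) : ⌊(m : k) / n⌋ = m / n := by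
  rw [Int.floor_div_natCast, Int.floor_intCast]

theorem ceil_intCast_div_natCast (m : ℤ) (n : ℕ) : ⌈(m : k) / n⌉ = -(-m / n) := by
  rw [← neg_neg ⌈_⌉, ← Int.floor_neg, ← neg_div, ← Int.cast_neg, floor_intCast_div_natCast]

end FloorDiv

theorem three_mul_next_length_le (L : ℤ) :
    3 * ⌈((L : ℝ) - ⌊((L : ℝ) - 2) / 3⌋) / 2⌉ ≤ L + 3 := by
  have hfloor : ⌊((L : ℝ) - 2) / 3⌋ = (L - 2) / 3 := by
    exact_mod_cast floor_intCast_div_natCast (k := ℝ) (L - 2) 3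
  have hceil (m : ℤ) : ⌈(m : ℝ) / 2⌉ = -(-m / 2) := by
    exact_mod_cast ceil_intCast_div_natCast (k := ℝ) m 2
  rw [hfloor, ← Int.cast_sub, hceil]
  omega

theorem le_div_pow_of_forall_succ_le_div {α : Type*} [Field α] [LinearOrder α] [IsOrderedRing α]
    {v : ℕ → α} {b : α} (hb : 0 ≤ b) (h : ∀ k, v (k + 1) ≤ v k / b) (k : ℕ) :
    v k ≤ v 0 / b ^ k := by
  induction k with
  | zero => simp
  | succ k ih =>
    calc v (k + 1) ≤ v k / b := h k
      _ ≤ v 0 / b ^ k / b := by gcongr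
      _ = v 0 / b ^ (k + 1) := by rw [pow_succ, div_div]

theorem exists_nat_lt_pow_le_logb_add_one {b y : ℝ} (hb : 1 < b) (hy : 1 ≤ y) :
    ∃ n : ℕ, y < b ^ n ∧ (n : ℝ) ≤ Real.logb b y + 1 := by
  have hlog : 0 ≤ Real.logb b y := Real.logb_nonneg hb hy
  refine ⟨⌊Real.logb b y⌋₊ + 1, ?_, ?_⟩
  · rw [← Real.rpow_natCast, ← Real.logb_lt_iff_lt_rpow hb (by linarith)]
    exact_mod_cast Nat.lt_floor_add_one _
  · push_cast
    linarith [Nat.floor_le hlog]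

/-- for an integer `d ≥ 5` and the sequence `l_0 = d`,
`l_{k+1} = ⌈(l_k − ⌊(l_k − 2)/3⌋)/2⌉`, the set `{k : l_k < 5}` is nonempty and its
minimum `k₀` satisfies `k₀ ≤ log_3[(4/13)(d − 3/4)] + 1`. -/
theorem recursion_depth_bound (d : ℤ) (hd : 5 ≤ d) (l : ℕ → ℤ) (h0 : l 0 = d)
    (hrec : ∀ k : ℕ, l (k + 1) = ⌈((l k : ℝ) - (⌊((l k : ℝ) - 2) / 3⌋ : ℝ)) / 2⌉) :
    {k : ℕ | l k < 5}.Nonempty ∧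
      ((sInf {k : ℕ | l k < 5} : ℕ) : ℝ) ≤
        Real.logb 3 (4 / 13 * ((d : ℝ) - 3 / 4)) + 1 := by
  have hstep (k : ℕ) : 3 * (l (k + 1) : ℝ) ≤ l k + 3 := by
    rw [hrec]
    exact_mod_cast three_mul_next_length_le (l k)
  have hdecay (k : ℕ) : (l k : ℝ) - 3 / 2 ≤ ((d : ℝ) - 3 / 2) / 3 ^ k := by
    simpa [h0] using le_div_pow_of_forall_succ_le_div (v := fun k => (l k : ℝ) - 3 / 2)
      (by norm_num) (fun k => by linarith [hstep k]) k
  have hd' : (5 : ℝ) ≤ d := by exact_mod_cast hd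
  obtain ⟨n, hn_pow, hn_log⟩ :=
    exists_nat_lt_pow_le_logb_add_one (b := 3) (y := 2 / 7 * ((d : ℝ) - 3 / 2))
      (by norm_num) (by linarith)
  have hln : l n < 5 := by
    have : ((d : ℝ) - 3 / 2) / 3 ^ n < 7 / 2 := by
      rw [div_lt_iff₀ (by positivity)]
      linarith
    exact_mod_cast (show (l n : ℝ) < 5 by linarith [hdecay n])
  refine ⟨⟨n, hln⟩, ?_⟩
  calc ((sInf {k : ℕ | l k < 5} : ℕ) : ℝ) ≤ n := by exact_mod_cast Nat.sInf_le hln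
    _ ≤ Real.logb 3 (2 / 7 * ((d : ℝ) - 3 / 2)) + 1 := hn_log
    _ ≤ Real.logb 3 (4 / 13 * ((d : ℝ) - 3 / 4)) + 1 := by
      gcongr ?_ + 1
      exact Real.logb_le_logb_of_le (by norm_num) (by linarith) (by linarith)
end

section
/- Let λ > 1, τ > 0, and 0 < q < 1, with log denoting the natural logarithm. Then there exist constants C > 0 and d₀ > 0 (depending only on λ, τ, q) such that for every real d ≥ d₀, ∑_{k=1}^∞ λ^{τ k log k} · min(d³ q^{2^k}, 1) ≤ exp(C · log log d · log log log d). -/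
open Real

private lemma exp_ge_cube (x : ℝ) (hx : 0 ≤ x) : (x/3)^3 ≤ Real.exp x := by
  have h1 : x/3 ≤ Real.exp (x/3) := le_trans (by linarith) (Real.add_one_le_exp _)
  have h2 : (x/3)^3 ≤ (Real.exp (x/3))^3 := pow_le_pow_left₀ (by positivity) h1 3
  calc (x/3)^3 ≤ (Real.exp (x/3))^3 := h2
    _ = Real.exp x := by rw [← Real.exp_nat_mul]; push_cast; ring_nf

private lemma min_le_rpow_aux {x ε : ℝ} (hx : 0 ≤ x) (hε0 : 0 < ε) (hε1 : ε ≤ 1) :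
    min x 1 ≤ x ^ ε := by
  rcases le_total x 1 with h | h
  · rw [min_eq_left h]
    rcases eq_or_lt_of_le hx with h0 | h0
    · rw [← h0, Real.zero_rpow (ne_of_gt hε0)]
    · calc x = x ^ (1:ℝ) := (Real.rpow_one x).symm
        _ ≤ x ^ ε := Real.rpow_le_rpow_of_exponent_ge h0 h hε1
  · rw [min_eq_right h]
    calc (1:ℝ) = 1 ^ ε := (Real.one_rpow ε).symm
      _ ≤ x ^ ε := Real.rpow_le_rpow zero_le_one h (le_of_lt hε0)

private lemma key_bound {a b T : ℝ} (ha : 0 < a) (hb : 0 < b) (hT1 : 1 ≤ T)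
    (hT2 : a / (b * (Real.log 2 / 6)^3) ≤ Real.exp (T * Real.log 2 / 2))
    (n : ℕ) (hn : 1 ≤ n) :
    a * n * Real.log n ≤ a * T * Real.log T + b * 2^n := by
  have hlog2 : 0 < Real.log 2 := Real.log_pos one_lt_two
  have hgam : (0:ℝ) < (Real.log 2 / 6)^3 := by positivity
  have hn1 : (1:ℝ) ≤ (n:ℝ) := by exact_mod_cast hn
  have hnpos : (0:ℝ) < n := lt_of_lt_of_le one_pos hn1
  rcases le_total (n : ℝ) T with h | h
  · have h1 : Real.log n ≤ Real.log T := Real.log_le_log hnpos h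
    have h2 : 0 ≤ Real.log n := Real.log_nonneg hn1
    have h3 : (0:ℝ) ≤ b * 2^n := by positivity
    nlinarith [mul_le_mul (mul_le_mul_of_nonneg_left h ha.le) h1 h2
      (by positivity : (0:ℝ) ≤ a * T)]
  · have hTlog : 0 ≤ a * T * Real.log T := by
      have := Real.log_nonneg hT1; positivity
    have hlogn : Real.log n ≤ (n:ℝ) := by
      have := Real.log_le_sub_one_of_pos hnpos; linarith
    have h2n : (2:ℝ)^n = Real.exp ((n:ℝ) * Real.log 2 / 2) * Real.exp ((n:ℝ) * Real.log 2 / 2) := by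
      rw [← Real.exp_add,
        show (n:ℝ) * Real.log 2 / 2 + (n:ℝ) * Real.log 2 / 2 = (n:ℝ) * Real.log 2 by ring,
        Real.exp_nat_mul, Real.exp_log two_pos]
    have hcube : (Real.log 2 / 6)^3 * (n:ℝ)^3 ≤ Real.exp ((n:ℝ) * Real.log 2 / 2) := by
      have h0 : (0:ℝ) ≤ (n:ℝ) * Real.log 2 / 2 := by positivity
      calc (Real.log 2 / 6)^3 * (n:ℝ)^3 = ((n:ℝ) * Real.log 2 / 2 / 3)^3 := by ring
        _ ≤ _ := exp_ge_cube _ h0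
    have hfac : a / (b * (Real.log 2 / 6)^3) ≤ Real.exp ((n:ℝ) * Real.log 2 / 2) := by
      refine hT2.trans (Real.exp_le_exp.2 ?_)
      nlinarith [mul_nonneg (sub_nonneg.2 h) hlog2.le]
    have key : a * (n:ℝ)^3 ≤ b * 2^n := by
      rw [h2n]
      calc a * (n:ℝ)^3
          = b * (((Real.log 2 / 6)^3 * (n:ℝ)^3) * (a / (b * (Real.log 2 / 6)^3))) := by
            field_simp
        _ ≤ b * (Real.exp ((n:ℝ) * Real.log 2 / 2) * Real.exp ((n:ℝ) * Real.log 2 / 2)) := by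
            apply mul_le_mul_of_nonneg_left _ hb.le
            exact mul_le_mul hcube hfac (by positivity) (Real.exp_pos _).le
    have h5 : a * (n:ℝ) * Real.log n ≤ a * (n:ℝ)^3 := by
      nlinarith [mul_le_mul_of_nonneg_left hlogn (mul_nonneg ha.le hnpos.le),
        mul_nonneg (mul_nonneg ha.le (mul_nonneg hnpos.le hnpos.le)) (sub_nonneg.2 hn1)]
    linarith

set_option maxHeartbeats 1000000 in
private lemma geom_tail_aux {b : ℝ} (hb : 0 < b) (hb1 : b ≤ 1) :
    b / 2 ≤ 1 - Real.exp (-b) := by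
  have hE : (0:ℝ) < Real.exp b := Real.exp_pos b
  have hexpb : b + 1 ≤ Real.exp b := Real.add_one_le_exp b
  have h2 : (1:ℝ) ≤ (1 - b/2) * Real.exp b := by nlinarith
  have h3 : Real.exp (-b) ≤ 1 - b/2 := by
    rw [Real.exp_neg, inv_le_iff_one_le_mul₀ hE]
    linarith
  linarith

set_option maxHeartbeats 1000000 in
/-- for `λ > 1`, `τ > 0` and `0 < q < 1` there exist constants `C > 0` and
`d₀ > 0` such that for every real `d ≥ d₀`,
`∑_{k=1}^∞ λ^{τ k log k} · min(d³ q^{2^k}, 1) ≤ exp(C · log log d · log log log d)`. -/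
theorem average_runtime_bound (lam τ q : ℝ) (hlam : 1 < lam) (hτ : 0 < τ)
    (hq0 : 0 < q) (hq1 : q < 1) :
    ∃ C > (0 : ℝ), ∃ d₀ > (0 : ℝ), ∀ d : ℝ, d₀ ≤ d →
      (∑' k : ℕ, lam ^ (τ * ((k : ℝ) + 1) * Real.log ((k : ℝ) + 1)) *
          min (d ^ 3 * q ^ (2 ^ (k + 1) : ℕ)) 1) ≤
        Real.exp (C * Real.log (Real.log d) * Real.log (Real.log (Real.log d))) := by
  have hlam0 : (0:ℝ) < lam := by linarith
  obtain ⟨a, ha_def⟩ : ∃ x : ℝ, x = Real.log lam * τ := ⟨_, rfl⟩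
  have ha : 0 < a := ha_def ▸ mul_pos (Real.log_pos hlam) hτ
  obtain ⟨c, hc_def⟩ : ∃ x : ℝ, x = -Real.log q := ⟨_, rfl⟩
  have hc : 0 < c := by
    have := Real.log_neg hq0 hq1; rw [hc_def]; linarith
  have hlog2 : 0 < Real.log 2 := Real.log_pos one_lt_two
  have hlog2' : Real.log 2 ≠ 0 := ne_of_gt hlog2
  have hlog2le : Real.log 2 ≤ 1 := by
    have := Real.log_le_sub_one_of_pos (by norm_num : (0:ℝ) < 2); linarith
  have hgam : (0:ℝ) < (Real.log 2 / 6)^3 := by positivity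
  obtain ⟨B, hB_def⟩ : ∃ x : ℝ, x = 4 / Real.log 2 := ⟨_, rfl⟩
  have hB4 : 4 ≤ B := by
    rw [hB_def, le_div_iff₀ hlog2]; nlinarith
  have hB0 : 0 < B := by linarith
  have hlogB : 0 ≤ Real.log B := Real.log_nonneg (by linarith)
  obtain ⟨A, hA_def⟩ : ∃ x : ℝ, x = 2 * a / (c * (Real.log 2 / 6)^3) := ⟨_, rfl⟩
  have hA : 0 < A := by rw [hA_def]; positivity
  obtain ⟨R, hR_def⟩ : ∃ x : ℝ, x = Real.exp 1 + max 0 (Real.log c) + max 0 (Real.log A)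
      + max 0 (3 + Real.log (4/c)) := ⟨_, rfl⟩
  have hCpos : 0 < a * B * (Real.log B + 1) + 2 := by
    nlinarith [mul_pos (mul_pos ha hB0) (show (0:ℝ) < Real.log B + 1 by linarith)]
  refine ⟨a * B * (Real.log B + 1) + 2, hCpos, Real.exp (Real.exp R), Real.exp_pos _, ?_⟩
  intro d hd
  have hd0 : 0 < d := lt_of_lt_of_le (Real.exp_pos _) hd
  have hlogd : Real.exp R ≤ Real.log d := by
    calc Real.exp R = Real.log (Real.exp (Real.exp R)) := (Real.log_exp _).symm
      _ ≤ Real.log d := Real.log_le_log (Real.exp_pos _) hd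
  have hlogd0 : 0 < Real.log d := lt_of_lt_of_le (Real.exp_pos _) hlogd
  have hlogd' : Real.log d ≠ 0 := ne_of_gt hlogd0
  obtain ⟨L, hL_def⟩ : ∃ x : ℝ, x = Real.log (Real.log d) := ⟨_, rfl⟩
  rw [← hL_def]
  obtain ⟨LL, hLL_def⟩ : ∃ x : ℝ, x = Real.log L := ⟨_, rfl⟩
  rw [← hLL_def]
  have hRL : R ≤ L := by
    rw [hL_def]
    calc R = Real.log (Real.exp R) := (Real.log_exp _).symm
      _ ≤ Real.log (Real.log d) := Real.log_le_log (Real.exp_pos _) hlogd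
  have he1 : (1:ℝ) ≤ Real.exp 1 := Real.one_le_exp (by norm_num)
  have hmax1 : (0:ℝ) ≤ max 0 (Real.log c) := le_max_left _ _
  have hmax2 : (0:ℝ) ≤ max 0 (Real.log A) := le_max_left _ _
  have hmax3 : (0:ℝ) ≤ max 0 (3 + Real.log (4/c)) := le_max_left _ _
  have hRe : Real.exp 1 ≤ R := by rw [hR_def]; linarith
  have hLe : Real.exp 1 ≤ L := hRe.trans hRL
  have hL1 : 1 ≤ L := he1.trans hLe
  have hL0 : 0 < L := by linarith
  have hL0' : L ≠ 0 := ne_of_gt hL0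
  have hLL1 : 1 ≤ LL := by
    rw [hLL_def]
    calc (1:ℝ) = Real.log (Real.exp 1) := (Real.log_exp 1).symm
      _ ≤ Real.log L := Real.log_le_log (Real.exp_pos _) hLe
  have hcld : c ≤ Real.log d := by
    have h1 : Real.log c ≤ R := by
      have := le_max_right (0:ℝ) (Real.log c); rw [hR_def]; linarith
    calc c = Real.exp (Real.log c) := (Real.exp_log hc).symm
      _ ≤ Real.exp R := Real.exp_le_exp.2 h1
      _ ≤ Real.log d := hlogd
  have hlogA : Real.log A ≤ L := by
    have h1 : Real.log A ≤ R := by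
      have := le_max_right (0:ℝ) (Real.log A); rw [hR_def]; linarith
    exact le_trans h1 hRL
  have hL3 : 3 + Real.log (4/c) ≤ L := by
    have h1 : 3 + Real.log (4/c) ≤ R := by
      have := le_max_right (0:ℝ) (3 + Real.log (4/c)); rw [hR_def]; linarith
    exact le_trans h1 hRL
  have hlogd1 : 1 ≤ Real.log d := by
    have h2 : (1:ℝ) ≤ Real.exp R := Real.one_le_exp (by linarith)
    linarith
  -- set up b, T, M
  obtain ⟨b, hb_def⟩ : ∃ x : ℝ, x = c / (2 * Real.log d) := ⟨_, rfl⟩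
  have hb : 0 < b := by rw [hb_def]; positivity
  have hb1 : b ≤ 1 := by
    rw [hb_def, div_le_one (by positivity)]; linarith
  obtain ⟨T, hT_def⟩ : ∃ x : ℝ,
      x = max 1 ((2 / Real.log 2) * Real.log (a / (b * (Real.log 2 / 6)^3))) := ⟨_, rfl⟩
  have hT1 : 1 ≤ T := hT_def ▸ le_max_left _ _
  have hT0 : 0 < T := by linarith
  have habg : 0 < a / (b * (Real.log 2 / 6)^3) := by positivity
  have hT2 : a / (b * (Real.log 2 / 6)^3) ≤ Real.exp (T * Real.log 2 / 2) := by
    rw [← Real.exp_log habg]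
    apply Real.exp_le_exp.2
    have h1 : (2 / Real.log 2) * Real.log (a / (b * (Real.log 2 / 6)^3)) ≤ T :=
      hT_def ▸ le_max_right _ _
    calc Real.log (a / (b * (Real.log 2 / 6)^3))
        = ((2 / Real.log 2) * Real.log (a / (b * (Real.log 2 / 6)^3))) * Real.log 2 / 2 := by
          field_simp
      _ ≤ T * Real.log 2 / 2 := by gcongr
  have habg_eq : a / (b * (Real.log 2 / 6)^3) = A * Real.log d := by
    rw [hb_def, hA_def]
    field_simp
  have hTB : T ≤ B * L := by
    have h1 : Real.log (a / (b * (Real.log 2 / 6)^3)) = Real.log A + L := by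
      rw [habg_eq, Real.log_mul (ne_of_gt hA) hlogd', hL_def]
    have h2 : (2 / Real.log 2) * Real.log (a / (b * (Real.log 2 / 6)^3)) ≤ B * L := by
      rw [h1, hB_def]
      have h3 : Real.log A + L ≤ 2 * L := by linarith
      calc (2 / Real.log 2) * (Real.log A + L) ≤ (2 / Real.log 2) * (2 * L) := by
            apply mul_le_mul_of_nonneg_left h3 (by positivity)
        _ = (4 / Real.log 2) * L := by ring
    have h3 : (1:ℝ) ≤ B * L := by
      have h4 : (1:ℝ) * 1 ≤ B * L :=
        mul_le_mul (by linarith) hL1 zero_le_one (by linarith)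
      linarith only [h4]
    rw [hT_def]
    exact max_le h3 h2
  obtain ⟨M, hM_def⟩ : ∃ x : ℝ, x = a * T * Real.log T := ⟨_, rfl⟩
  have hlogT0 : 0 ≤ Real.log T := Real.log_nonneg hT1
  have hM0 : 0 ≤ M := by rw [hM_def]; positivity
  have hM_bound : M ≤ (a * B * (Real.log B + 1)) * (L * LL) := by
    have hlogT : Real.log T ≤ (Real.log B + 1) * LL := by
      calc Real.log T ≤ Real.log (B * L) := Real.log_le_log hT0 hTB
        _ = Real.log B + LL := by rw [Real.log_mul (ne_of_gt hB0) hL0', hLL_def]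
        _ ≤ (Real.log B + 1) * LL := by
            have h5 : Real.log B * 1 ≤ Real.log B * LL :=
              mul_le_mul_of_nonneg_left hLL1 hlogB
            have h6 : (Real.log B + 1) * LL = Real.log B * LL + LL := by ring
            linarith only [h5, h6, hLL1]
    calc M = a * T * Real.log T := hM_def
      _ ≤ a * (B * L) * ((Real.log B + 1) * LL) :=
          mul_le_mul (mul_le_mul_of_nonneg_left hTB ha.le) hlogT hlogT0 (by positivity)
      _ = (a * B * (Real.log B + 1)) * (L * LL) := by ring
  -- geometric data
  obtain ⟨r, hr_def⟩ : ∃ x : ℝ, x = Real.exp (-b) := ⟨_, rfl⟩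
  have hr0 : 0 < r := hr_def ▸ Real.exp_pos _
  have hr1 : r < 1 := by
    rw [hr_def, Real.exp_lt_one_iff]; linarith
  obtain ⟨D, hD_def⟩ : ∃ x : ℝ, x = Real.exp (3 + M) := ⟨_, rfl⟩
  have hD0 : 0 < D := hD_def ▸ Real.exp_pos _
  -- per-term bound
  have hterm : ∀ k : ℕ, lam ^ (τ * ((k : ℝ) + 1) * Real.log ((k : ℝ) + 1)) *
      min (d ^ 3 * q ^ (2 ^ (k + 1) : ℕ)) 1 ≤ D * r ^ (k + 1) := by
    intro k
    have hn1 : 1 ≤ k + 1 := Nat.le_add_left 1 k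
    have hcast : ((k:ℝ) + 1) = ((k + 1 : ℕ) : ℝ) := by push_cast; ring
    have h1 : lam ^ (τ * ((k:ℝ) + 1) * Real.log ((k:ℝ) + 1))
        = Real.exp (a * ((k+1:ℕ):ℝ) * Real.log ((k+1:ℕ):ℝ)) := by
      rw [Real.rpow_def_of_pos hlam0, hcast, ha_def]; ring_nf
    have hX : (0:ℝ) ≤ d ^ 3 * q ^ (2 ^ (k + 1) : ℕ) := by positivity
    have hε0 : 0 < 1 / Real.log d := by positivity
    have hε1 : 1 / Real.log d ≤ 1 := by
      rw [div_le_one hlogd0]; linarith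
    have h2 : min (d ^ 3 * q ^ (2 ^ (k + 1) : ℕ)) 1
        ≤ (d ^ 3 * q ^ (2 ^ (k + 1) : ℕ)) ^ (1 / Real.log d) :=
      min_le_rpow_aux hX hε0 hε1
    have h3 : (d ^ 3 * q ^ (2 ^ (k + 1) : ℕ)) ^ (1 / Real.log d)
        = Real.exp 3 * Real.exp (-(2 * b) * (2:ℝ) ^ (k + 1)) := by
      rw [Real.mul_rpow (by positivity) (by positivity),
        Real.rpow_def_of_pos (by positivity : (0:ℝ) < d ^ 3),
        Real.rpow_def_of_pos (by positivity : (0:ℝ) < q ^ (2 ^ (k + 1) : ℕ))]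
      congr 1
      · congr 1
        rw [Real.log_pow]
        push_cast
        field_simp
      · congr 1
        rw [Real.log_pow, hb_def, hc_def]
        push_cast
        field_simp
    have h4 : a * ((k+1:ℕ):ℝ) * Real.log ((k+1:ℕ):ℝ) ≤ a * T * Real.log T + b * 2 ^ (k+1) :=
      key_bound ha hb hT1 hT2 (k+1) hn1
    have h4' : a * ((k+1:ℕ):ℝ) * Real.log ((k+1:ℕ):ℝ) ≤ M + b * 2 ^ (k+1) := by
      rw [hM_def]; exact h4
    have h2n : ((k+1:ℕ):ℝ) ≤ (2:ℝ) ^ (k+1) := by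
      exact_mod_cast (Nat.lt_two_pow_self (n := k+1)).le
    calc lam ^ (τ * ((k:ℝ) + 1) * Real.log ((k:ℝ) + 1)) *
          min (d ^ 3 * q ^ (2 ^ (k + 1) : ℕ)) 1
        ≤ Real.exp (a * ((k+1:ℕ):ℝ) * Real.log ((k+1:ℕ):ℝ)) *
          ((d ^ 3 * q ^ (2 ^ (k + 1) : ℕ)) ^ (1 / Real.log d)) := by
          rw [h1]; exact mul_le_mul_of_nonneg_left h2 (Real.exp_pos _).le
      _ = Real.exp (a * ((k+1:ℕ):ℝ) * Real.log ((k+1:ℕ):ℝ) +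
            (3 + -(2 * b) * (2:ℝ) ^ (k + 1))) := by
          rw [h3, ← Real.exp_add, ← Real.exp_add]
      _ ≤ Real.exp ((3 + M) + -(b * (2:ℝ) ^ (k + 1))) := by
          apply Real.exp_le_exp.2; linarith
      _ = D * Real.exp (-(b * (2:ℝ) ^ (k + 1))) := by rw [hD_def, Real.exp_add]
      _ ≤ D * r ^ (k + 1) := by
          apply mul_le_mul_of_nonneg_left _ hD0.le
          rw [hr_def, ← Real.exp_nat_mul]
          apply Real.exp_le_exp.2
          have h5 : b * ((k+1:ℕ):ℝ) ≤ b * (2:ℝ) ^ (k+1) :=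
            mul_le_mul_of_nonneg_left h2n hb.le
          push_cast
          push_cast at h5
          linarith
  have hf_nonneg : ∀ k : ℕ, 0 ≤ lam ^ (τ * ((k : ℝ) + 1) * Real.log ((k : ℝ) + 1)) *
      min (d ^ 3 * q ^ (2 ^ (k + 1) : ℕ)) 1 := fun k =>
    mul_nonneg (Real.rpow_nonneg hlam0.le _) (le_min (by positivity) zero_le_one)
  have hg : Summable (fun k : ℕ => D * r ^ (k + 1)) := by
    have h := (summable_geometric_of_lt_one hr0.le hr1).mul_left (D * r)
    exact h.congr fun k => by ring
  have hf : Summable (fun k : ℕ => lam ^ (τ * ((k : ℝ) + 1) * Real.log ((k : ℝ) + 1)) *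
      min (d ^ 3 * q ^ (2 ^ (k + 1) : ℕ)) 1) :=
    Summable.of_nonneg_of_le hf_nonneg hterm hg
  have h1r : b / 2 ≤ 1 - r := by
    rw [hr_def]; exact geom_tail_aux hb hb1
  have h1r0 : 0 < 1 - r := lt_of_lt_of_le (by positivity) h1r
  have hsum : (∑' k : ℕ, D * r ^ (k + 1)) ≤ D * (2 / b) := by
    have e1 : (∑' k : ℕ, D * r ^ (k + 1)) = (D * r) * (1 - r)⁻¹ := by
      calc (∑' k : ℕ, D * r ^ (k + 1)) = ∑' k : ℕ, (D * r) * r ^ k :=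
            tsum_congr fun k => by ring
        _ = (D * r) * ∑' k : ℕ, r ^ k := tsum_mul_left
        _ = (D * r) * (1 - r)⁻¹ := by rw [tsum_geometric_of_lt_one hr0.le hr1]
    rw [e1]
    have hinv : (1 - r)⁻¹ ≤ 2 / b := by
      rw [show (2:ℝ)/b = (b/2)⁻¹ by rw [inv_div]]
      exact inv_anti₀ (by positivity) h1r
    calc (D * r) * (1 - r)⁻¹ ≤ (D * 1) * (2 / b) := by
          apply mul_le_mul (mul_le_mul_of_nonneg_left hr1.le hD0.le) hinv
            (by positivity) (by positivity)
      _ = D * (2 / b) := by ring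
  have hfinal : D * (2 / b) ≤
      Real.exp ((a * B * (Real.log B + 1) + 2) * L * LL) := by
    have h2b : 2 / b = (4 / c) * Real.log d := by
      rw [hb_def]
      field_simp
      ring
    have e4c : Real.exp (Real.log (4/c)) = 4/c := Real.exp_log (by positivity)
    have eld : Real.exp L = Real.log d := by rw [hL_def]; exact Real.exp_log hlogd0
    have heq : D * (2 / b) = Real.exp (3 + M + (Real.log (4/c) + L)) := by
      calc D * (2/b) = Real.exp (3 + M) * ((4/c) * Real.log d) := by rw [hD_def, h2b]
        _ = Real.exp (3 + M) * (Real.exp (Real.log (4/c)) * Real.exp L) := by rw [e4c, eld]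
        _ = Real.exp (3 + M + (Real.log (4/c) + L)) := by rw [← Real.exp_add, ← Real.exp_add]
    rw [heq]
    apply Real.exp_le_exp.2
    have hLLL : L ≤ L * LL := le_mul_of_one_le_right hL0.le hLL1
    have hring : (a * B * (Real.log B + 1) + 2) * L * LL
        = a * B * (Real.log B + 1) * (L * LL) + 2 * (L * LL) := by ring
    rw [hring]
    linarith only [hM_bound, hLLL, hL3]
  calc (∑' k : ℕ, lam ^ (τ * ((k : ℝ) + 1) * Real.log ((k : ℝ) + 1)) *
          min (d ^ 3 * q ^ (2 ^ (k + 1) : ℕ)) 1)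
      ≤ ∑' k : ℕ, D * r ^ (k + 1) := Summable.tsum_le_tsum hterm hf hg
    _ ≤ D * (2 / b) := hsum
    _ ≤ Real.exp ((a * B * (Real.log B + 1) + 2) * L * LL) := hfinal
end
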